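/- arXiv:1609.07319 — 2 statements merged into one kernel-verified Lean document; each statement's English description precedes it below -/
import Mathlib

section
/- Let p be a prime. For any pair (x_∞, x_p) ∈ ℝ × ℚ_p, there exists z ∈ ℤ[1/p] such that the set {z' ∈ ℤ[1/p] : z' + x_p ∈ ℤ_p} equals z + ℤ. -/
private lemma helper_int (p : ℕ) [Fact p.Prime] (q : ℚ) (b : ℤ) (m : ℕ)
    (hq : q = (b : ℚ) / (p : ℚ) ^ m) (h : ‖(q : ℚ_[p])‖ ≤ 1) : ∃ k : ℤ, q = (k : ℚ) := by
  have hp0 : (p : ℚ) ≠ 0 := Nat.cast_ne_zero.mpr (Fact.out : p.Prime).ne_zero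
  have hp0' : (p : ℚ_[p]) ≠ 0 := Nat.cast_ne_zero.mpr (Fact.out : p.Prime).ne_zero
  have hcast : (b : ℚ_[p]) = (q : ℚ_[p]) * (p : ℚ_[p]) ^ m := by
    rw [hq]; push_cast; field_simp
  have hb : ‖(b : ℚ_[p])‖ ≤ (p : ℝ) ^ (-m : ℤ) := by
    rw [hcast, norm_mul, Padic.norm_p_pow]
    calc ‖(q : ℚ_[p])‖ * (p:ℝ) ^ (-m : ℤ) ≤ 1 * (p:ℝ) ^ (-m : ℤ) := by
          apply mul_le_mul_of_nonneg_right h (by positivity)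
      _ = (p:ℝ) ^ (-m : ℤ) := one_mul _
  obtain ⟨c, hc⟩ := (Padic.norm_int_le_pow_iff_dvd b m).mp hb
  refine ⟨c, ?_⟩
  rw [hq, hc]
  push_cast
  field_simp

/-- For any pair `(x_∞, x_p) ∈ ℝ × ℚ_p` there exists `z ∈ ℤ[1/p]` such that the set of
`z' ∈ ℤ[1/p]` with `z' + x_p ∈ ℤ_p` is exactly `z + ℤ`. -/
theorem solenoid_key_lemma (p : ℕ) [Fact p.Prime] (x_inf : ℝ) (x_p : ℚ_[p]) :
    ∃ z : ℚ, (∃ (a : ℤ) (n : ℕ), z = (a : ℚ) / (p : ℚ) ^ n) ∧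
      {z' : ℚ | (∃ (a : ℤ) (n : ℕ), z' = (a : ℚ) / (p : ℚ) ^ n) ∧ ‖(z' : ℚ_[p]) + x_p‖ ≤ 1}
        = {w : ℚ | ∃ m : ℤ, w = z + m} := by
  have hp : (1:ℝ) < (p : ℝ) := by exact_mod_cast (Fact.out : p.Prime).one_lt
  have hp0 : (p : ℚ) ≠ 0 := Nat.cast_ne_zero.mpr (Fact.out : p.Prime).ne_zero
  have hp0' : (p : ℚ_[p]) ≠ 0 := Nat.cast_ne_zero.mpr (Fact.out : p.Prime).ne_zero
  -- find n with ‖x_p‖ ≤ p ^ n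
  obtain ⟨n, hn⟩ := pow_unbounded_of_one_lt ‖x_p‖ hp
  have hppos : (0:ℝ) < (p : ℝ) ^ n := by positivity
  have hy : ‖(p : ℚ_[p]) ^ n * x_p‖ ≤ 1 := by
    rw [norm_mul, Padic.norm_p_pow, zpow_neg, zpow_natCast]
    rw [inv_mul_le_iff₀ hppos, mul_one]
    exact hn.le
  set y : ℤ_[p] := ⟨(p : ℚ_[p]) ^ n * x_p, hy⟩ with hy_def
  set a : ℕ := y.appr n with ha_def
  have ha : ‖y - (a : ℤ_[p])‖ ≤ (p : ℝ) ^ (-n : ℤ) :=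
    ((y - (a : ℤ_[p])).norm_le_pow_iff_mem_span_pow n).mpr (y.appr_spec n)
  have haQ : ‖(p : ℚ_[p]) ^ n * x_p - (a : ℚ_[p])‖ ≤ (p : ℝ) ^ (-n : ℤ) := by
    have : ((y - (a : ℤ_[p]) : ℤ_[p]) : ℚ_[p]) = (p : ℚ_[p]) ^ n * x_p - (a : ℚ_[p]) := by
      push_cast [hy_def]; rfl
    rw [PadicInt.norm_def, this] at ha
    exact ha
  refine ⟨(-(a : ℤ) : ℚ) / (p : ℚ) ^ n, ⟨-(a : ℤ), n, rfl⟩, ?_⟩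
  set z : ℚ := (-(a : ℤ) : ℚ) / (p : ℚ) ^ n with hz_def
  have hzQp : (z : ℚ_[p]) + x_p = ((p : ℚ_[p]) ^ n * x_p - (a : ℚ_[p])) / (p : ℚ_[p]) ^ n := by
    rw [hz_def]; push_cast; field_simp; ring
  have hznorm : ‖(z : ℚ_[p]) + x_p‖ ≤ 1 := by
    rw [hzQp, norm_div, Padic.norm_p_pow]
    rw [div_le_one (by positivity)]
    exact haQ
  ext w
  simp only [Set.mem_setOf_eq]
  constructor
  · rintro ⟨⟨b, m, hw⟩, hnorm⟩
    have hsub : w - z = ((b * (p:ℤ) ^ n + (a : ℤ) * (p:ℤ) ^ m : ℤ) : ℚ) / (p : ℚ) ^ (m + n) := by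
      rw [hw, hz_def]; push_cast; field_simp; ring
    have hsubnorm : ‖((w - z : ℚ) : ℚ_[p])‖ ≤ 1 := by
      have : ((w - z : ℚ) : ℚ_[p]) = ((w : ℚ_[p]) + x_p) + (-((z : ℚ_[p]) + x_p)) := by
        push_cast; ring
      rw [this]
      refine le_trans (Padic.nonarchimedean _ _) (max_le hnorm ?_)
      rwa [norm_neg]
    obtain ⟨k, hk⟩ := helper_int p (w - z) _ _ hsub hsubnorm
    exact ⟨k, by linarith [hk]⟩
  · rintro ⟨k, hk⟩
    refine ⟨⟨-(a : ℤ) + k * (p:ℤ) ^ n, n, ?_⟩, ?_⟩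
    · rw [hk, hz_def]; push_cast; field_simp
    · have : ((w : ℚ_[p])) + x_p = ((z : ℚ_[p]) + x_p) + (k : ℚ_[p]) := by
        rw [hk]; push_cast; ring
      rw [this]
      refine le_trans (Padic.nonarchimedean _ _) (max_le hznorm ?_)
      exact Padic.norm_int_le_one k
end

section
/- For every adele x ∈ 𝔸 there exists a rational q ∈ ℚ such that x − q lies in [0,1) × ∏_p ℤ_p, and this q is unique modulo 0 (i.e. the representative in [0,1) × ∏_p ℤ_p is unique). -/
open IsDedekindDomain IsDedekindDomain.HeightOneSpectrum
open scoped Multiplicative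

noncomputable section AdeleAux

/-- The height-one prime of ℤ attached to a prime integer. -/
def vOf (p : ℤ) (hp : Prime p) : HeightOneSpectrum ℤ where
  asIdeal := Ideal.span {p}
  isPrime := (Ideal.span_singleton_prime hp.ne_zero).2 hp
  ne_bot := by simpa [Ideal.span_singleton_eq_bot] using hp.ne_zero

lemma val_int (v : HeightOneSpectrum ℤ) (m : ℤ) :
    v.valuation ℚ ((m : ℚ)) = v.intValuation m := by
  have : ((m : ℚ)) = algebraMap ℤ ℚ m := by simp
  rw [this, valuation_of_algebraMap]

lemma val_int_le_one (v : HeightOneSpectrum ℤ) (m : ℤ) :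
    v.valuation ℚ ((m : ℚ)) ≤ 1 := by
  rw [val_int]; exact intValuation_le_one v m

lemma intVal_lt_one {v : HeightOneSpectrum ℤ} {k : ℤ} (h : v.asIdeal ∣ Ideal.span {k}) :
    v.intValuation k < 1 := by
  rw [intValuation_apply]; exact (intValuation_lt_one_iff_dvd v k).2 h

lemma intVal_eq_one {v : HeightOneSpectrum ℤ} {k : ℤ} (h : ¬ v.asIdeal ∣ Ideal.span {k}) :
    v.intValuation k = 1 := by
  rw [intValuation_apply]
  rcases lt_or_eq_of_le (intValuation_le_one v k) with hlt | heq
  · exact absurd ((intValuation_lt_one_iff_dvd v k).1 hlt) h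
  · exact heq

lemma vOf_dvd_iff {p : ℤ} (hp : Prime p) (k : ℤ) :
    (vOf p hp).asIdeal ∣ Ideal.span {k} ↔ p ∣ k := by
  rw [Ideal.dvd_span_singleton]
  exact Ideal.mem_span_singleton

lemma den_not_int {q : ℚ} {p : ℤ} (hp : Prime p) (hdvd : p ∣ (q.den : ℤ))
    (h : (vOf p hp).valuation ℚ q ≤ 1) : False := by
  have hden : (vOf p hp).intValuation (q.den : ℤ) < 1 :=
    intVal_lt_one ((vOf_dvd_iff hp _).2 hdvd)
  have hnum : (vOf p hp).intValuation q.num = 1 := by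
    apply intVal_eq_one
    rw [vOf_dvd_iff]
    intro hd
    have h1 : p.natAbs ∣ q.num.natAbs := Int.natAbs_dvd_natAbs.mpr hd
    have h2 : p.natAbs ∣ q.den := by
      have := Int.natAbs_dvd_natAbs.mpr hdvd
      simpa using this
    have h3 : p.natAbs ∣ 1 := by
      have := Nat.dvd_gcd h1 h2
      rwa [q.reduced] at this
    have := Int.prime_iff_natAbs_prime.1 hp
    simp [Nat.dvd_one] at h3
    exact this.one_lt.ne' h3
  have hmul : (vOf p hp).valuation ℚ q * (vOf p hp).intValuation (q.den : ℤ) =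
      (vOf p hp).intValuation q.num := by
    rw [← val_int, ← val_int, ← Valuation.map_mul]
    norm_cast
    rw [Rat.mul_den_eq_num]
  have : (vOf p hp).valuation ℚ q * (vOf p hp).intValuation (q.den : ℤ) < 1 := by
    calc (vOf p hp).valuation ℚ q * (vOf p hp).intValuation (q.den : ℤ)
        ≤ 1 * (vOf p hp).intValuation (q.den : ℤ) := mul_le_mul_left h _
      _ = (vOf p hp).intValuation (q.den : ℤ) := one_mul _
      _ < 1 := hden
  rw [hmul, hnum] at this
  exact lt_irrefl _ this

lemma rat_int_of_val_le_one (q : ℚ) (h : ∀ v : HeightOneSpectrum ℤ, v.valuation ℚ q ≤ 1) :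
    ∃ z : ℤ, (z : ℚ) = q := by
  by_cases hden : q.den = 1
  · exact ⟨q.num, by rw [← Rat.num_div_den q, hden]; simp⟩
  · obtain ⟨p, hp, hpd⟩ := Nat.exists_prime_and_dvd hden
    have hp' : Prime (p : ℤ) := Int.prime_iff_natAbs_prime.2 (by simpa using hp)
    exact absurd (h (vOf _ hp')) (fun hle => den_not_int hp' (Int.ofNat_dvd.2 hpd) hle)

lemma vcompl (v : HeightOneSpectrum ℤ) (k : ℚ) :
    Valued.v (algebraMap ℚ (v.adicCompletion ℚ) k) = v.valuation ℚ k :=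
  valuedAdicCompletion_eq_valuation' (v := v) k

lemma exists_rat_close (v : HeightOneSpectrum ℤ) (y : v.adicCompletion ℚ) (γ : (WithZero (Multiplicative ℤ))ˣ) :
    ∃ r : ℚ, Valued.v (y - algebraMap ℚ (v.adicCompletion ℚ) r) < (γ : WithZero (Multiplicative ℤ)) := by
  have hy : y ∈ closure (Set.range (⇑(algebraMap ℚ (v.adicCompletion ℚ)))) :=
    denseRange_algebraMap (K := ℚ) (v := v) y
  rw [mem_closure_iff_nhds] at hy
  obtain ⟨t, ht⟩ := valuedAdicCompletion_surjective (K := ℚ) v (γ : WithZero (Multiplicative ℤ))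
  have ht0 : Valued.v.restrict t ≠ 0 := fun h =>
    γ.ne_zero (by rw [← ht, (Valuation.zero_iff _).1 h, map_zero])
  obtain ⟨z, hz1, r, rfl⟩ := hy {z | Valued.v (z - y) < (γ : WithZero (Multiplicative ℤ))}
    (Valued.mem_nhds.2 ⟨Units.mk0 _ ht0, fun z hz => by
      rw [Set.mem_setOf_eq, ← ht]; exact (Valuation.restrict_lt_iff _).1 hz⟩)
  refine ⟨r, ?_⟩
  rw [Valuation.map_sub_swap]
  exact hz1

end AdeleAux

noncomputable section SA

lemma strong_approx (N : ℕ) : ∀ (n : ℤ), n ≠ 0 → n.natAbs ≤ N →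
    ∀ a : (∀ v : HeightOneSpectrum ℤ, v.adicCompletion ℚ),
    (∀ v, Valued.v (algebraMap ℚ (v.adicCompletion ℚ) ((n : ℚ)) * a v) ≤ 1) →
    ∃ q : ℚ, ∀ v, Valued.v (a v - algebraMap ℚ (v.adicCompletion ℚ) q) ≤ 1 := by
  induction N with
  | zero => intro n hn hle; exact absurd (Int.natAbs_eq_zero.1 (Nat.le_zero.1 hle)) hn
  | succ N ih =>
    intro n hn hle a ha
    by_cases h1 : n.natAbs = 1
    · refine ⟨0, fun v => ?_⟩
      rw [map_zero, sub_zero]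
      have hu : IsUnit n := Int.isUnit_iff_natAbs_eq.2 h1
      have hsp : Ideal.span {n} = ⊤ := Ideal.span_singleton_eq_top.2 hu
      have hv1 : Valued.v (algebraMap ℚ (v.adicCompletion ℚ) ((n : ℚ))) = 1 := by
        rw [vcompl, val_int]
        apply intVal_eq_one
        intro hd
        have := Ideal.le_of_dvd hd
        rw [hsp, top_le_iff] at this
        exact v.isPrime.ne_top this
      have := ha v
      rwa [Valuation.map_mul, hv1, one_mul] at this
    · obtain ⟨p, hp, hpd⟩ := Int.exists_prime_and_dvd h1
      obtain ⟨n', rfl⟩ := hpd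
      have hp0 : p ≠ 0 := hp.ne_zero
      have hn'0 : n' ≠ 0 := by rintro rfl; simp at hn
      have hb : n'.natAbs ≤ N := by
        have h2 : 2 ≤ p.natAbs := (Int.prime_iff_natAbs_prime.1 hp).two_le
        have h3 : 1 ≤ n'.natAbs := Int.natAbs_pos.2 hn'0
        rw [Int.natAbs_mul] at hle
        nlinarith
      set v₀ := vOf p hp with hv₀
      set f₀ := algebraMap ℚ (v₀.adicCompletion ℚ) with hf₀
      set y := f₀ ((p * n' : ℤ) : ℚ) * a v₀ with hy
      have hwp0 : v₀.intValuation p ≠ 0 := by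
        rw [intValuation_apply]; exact intValuation_ne_zero v₀ p hp0
      obtain ⟨r, hr⟩ := exists_rat_close v₀ y (Units.mk0 _ hwp0)
      rw [Units.val_mk0] at hr
      -- r has valuation ≤ 1 at v₀
      have hyle : Valued.v y ≤ 1 := ha v₀
      have hr1 : v₀.valuation ℚ r ≤ 1 := by
        rw [← vcompl]
        have : f₀ r = y - (y - f₀ r) := by ring
        rw [this]
        refine le_trans (Valuation.map_sub _ _ _) (max_le hyle (le_trans hr.le ?_))
        rw [intValuation_apply]
        exact intValuation_le_one v₀ p
      have hpden : ¬ (p ∣ (r.den : ℤ)) := fun hd => den_not_int hp hd hr1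
      obtain ⟨u, w, huw⟩ : IsCoprime ((r.den : ℤ)) p :=
        ((hp.coprime_iff_not_dvd).2 hpden).symm
      set m : ℤ := r.num * u with hm
      have h0 : (r * ((r.den : ℤ) : ℚ)) = ((r.num : ℚ)) := by
        push_cast
        exact_mod_cast Rat.mul_den_eq_num r
      have huwq : (u : ℚ) * ((r.den : ℤ) : ℚ) + (w : ℚ) * (p : ℚ) = 1 := by
        exact_mod_cast congrArg (fun z : ℤ => (z : ℚ)) huw
      have hkey : (r - (m : ℚ)) * ((r.den : ℤ) : ℚ) = ((p : ℤ) : ℚ) * ((r.num * w : ℤ) : ℚ) := by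
        push_cast [hm]
        linear_combination h0 - (r.num : ℚ) * huwq
      have hval_rm : v₀.valuation ℚ (r - (m : ℚ)) ≤ v₀.intValuation p := by
        have hc := congrArg (v₀.valuation ℚ) hkey
        rw [Valuation.map_mul, Valuation.map_mul, val_int, val_int, val_int,
          intVal_eq_one (fun hd => hpden ((vOf_dvd_iff hp _).1 hd)), mul_one] at hc
        calc v₀.valuation ℚ (r - (m : ℚ)) = v₀.intValuation p * v₀.intValuation (r.num * w) := hc
          _ ≤ v₀.intValuation p * 1 := mul_le_mul_right (intValuation_le_one v₀ _) _
          _ = v₀.intValuation p := mul_one _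
      have hym : Valued.v (y - f₀ ((m : ℤ) : ℚ)) ≤ v₀.intValuation p := by
        have hsplit : y - f₀ ((m : ℤ) : ℚ) = (y - f₀ r) + f₀ (r - (m : ℚ)) := by
          rw [f₀.map_sub]; ring
        rw [hsplit]
        refine le_trans (Valuation.map_add _ _ _) (max_le (le_trans hr.le le_rfl) ?_)
        rw [vcompl]
        exact hval_rm
      -- new adele
      set q0 : ℚ := (m : ℚ) / ((p * n' : ℤ) : ℚ) with hq0def
      set a' : ∀ v : HeightOneSpectrum ℤ, v.adicCompletion ℚ :=
        fun v => a v - algebraMap ℚ (v.adicCompletion ℚ) q0 with ha'def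
      have hpn0 : ((p * n' : ℤ) : ℚ) ≠ 0 := by exact_mod_cast mul_ne_zero hp0 hn'0
      have hq0 : ((n' : ℤ) : ℚ) * q0 * ((p : ℤ) : ℚ) = ((m : ℤ) : ℚ) := by
        have hnp : ((n' : ℤ) : ℚ) * ((p : ℤ) : ℚ) = ((p * n' : ℤ) : ℚ) := by push_cast; ring
        rw [mul_right_comm, hnp, hq0def]
        field_simp
      have ha' : ∀ v, Valued.v (algebraMap ℚ (v.adicCompletion ℚ) ((n' : ℚ)) * a' v) ≤ 1 := by
        intro v
        set f := algebraMap ℚ (v.adicCompletion ℚ) with hf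
        have hid : f ((n' : ℚ)) * (a' v) * f ((p : ℚ)) = f ((p * n' : ℤ) : ℚ) * a v - f ((m : ℤ) : ℚ) := by
          rw [ha'def, ← hq0, show ((p * n' : ℤ) : ℚ) = ((n' : ℤ) : ℚ) * ((p : ℤ) : ℚ) by push_cast; ring]
          rw [map_mul, map_mul, map_mul]
          ring
        have hples : Valued.v (f ((p * n' : ℤ) : ℚ) * a v - f ((m : ℤ) : ℚ)) ≤ Valued.v (f ((p : ℚ))) := by
          by_cases hvv : v = v₀
          · subst hvv
            rw [vcompl, val_int]
            exact hym
          · have hvp1 : Valued.v (f ((p : ℚ))) = 1 := by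
              rw [vcompl, val_int]
              apply intVal_eq_one
              intro hd
              have hle' := Ideal.le_of_dvd hd
              have hmax : (Ideal.span {p} : Ideal ℤ).IsMaximal := by
                refine Ideal.IsPrime.isMaximal ((Ideal.span_singleton_prime hp0).2 hp) ?_
                simpa [Ideal.span_singleton_eq_bot] using hp0
              have : Ideal.span {p} = v.asIdeal := hmax.eq_of_le v.isPrime.ne_top hle'
              exact hvv (HeightOneSpectrum.ext this.symm)
            rw [hvp1]
            refine le_trans (Valuation.map_sub _ _ _) (max_le (ha v) ?_)
            rw [vcompl]
            exact val_int_le_one v m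
        have hc2 := congrArg Valued.v hid
        rw [Valuation.map_mul] at hc2
        have hfp0 : Valued.v (f ((p : ℚ))) ≠ 0 := by
          rw [vcompl, val_int, intValuation_apply]
          exact intValuation_ne_zero v p hp0
        have := hc2.le.trans hples
        -- cancel Valued.v (f p)
        have hpos : (0 : WithZero (Multiplicative ℤ)) < Valued.v (f ((p : ℚ))) :=
          lt_of_le_of_ne zero_le' (Ne.symm hfp0)
        have hfin : Valued.v (f ((n' : ℚ)) * a' v) * Valued.v (f ((p : ℚ))) ≤
            1 * Valued.v (f ((p : ℚ))) := by rwa [one_mul]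
        exact le_of_mul_le_mul_right hfin hpos
      obtain ⟨q', hq'⟩ := ih n' hn'0 hb a' ha'
      refine ⟨q0 + q', fun v => ?_⟩
      have : a v - algebraMap ℚ (v.adicCompletion ℚ) (q0 + q') =
          a' v - algebraMap ℚ (v.adicCompletion ℚ) q' := by
        rw [ha'def, (algebraMap ℚ (v.adicCompletion ℚ)).map_add]; ring
      rw [this]
      exact hq' v

end SA

/-- Every adele `x ∈ 𝔸 = ℝ × ∏'_p ℚ_p` differs by a unique rational `q` from an element of the
fundamental domain `[0,1) × ∏_p ℤ_p`. -/
theorem adele_fundamental_domain (x : ℝ × FiniteAdeleRing ℤ ℚ) :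
    ∃! q : ℚ, (x.1 - (q : ℝ)) ∈ Set.Ico (0 : ℝ) 1 ∧
      ∀ v : HeightOneSpectrum ℤ,
        (x.2 - algebraMap ℚ (FiniteAdeleRing ℤ ℚ) q) v ∈ v.adicCompletionIntegers ℚ := by
  obtain ⟨b, hb0, ha⟩ : ∃ b : ℤ, b ≠ 0 ∧ ∀ v : HeightOneSpectrum ℤ,
      Valued.v (algebraMap ℚ (v.adicCompletion ℚ) (((b : ℤ) : ℚ)) * x.2 v) ≤ 1 := by
    classical
    let x2 : RestrictedProduct (fun v : HeightOneSpectrum ℤ => v.adicCompletion ℚ)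
      (fun v => (v.adicCompletionIntegers ℚ : Set (v.adicCompletion ℚ))) Filter.cofinite := x.2
    have hfin : Set.Finite {v : HeightOneSpectrum ℤ | ¬ x.2 v ∈ v.adicCompletionIntegers ℚ} :=
      Filter.eventually_cofinite.1 x2.2
    choose bv hbv0 hbv using fun v : HeightOneSpectrum ℤ =>
      adicCompletion.mul_nonZeroDivisor_mem_adicCompletionIntegers (K := ℚ) v (x.2 v)
    refine ⟨∏ w ∈ hfin.toFinset, bv w,
      Finset.prod_ne_zero_iff.2 (fun w _ => nonZeroDivisors.ne_zero (hbv0 w)), ?_⟩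
    intro v
    have hcast : ∀ n : ℤ, algebraMap ℚ (v.adicCompletion ℚ) (n : ℚ) =
        algebraMap ℤ (v.adicCompletion ℚ) n := fun n => by simp
    have hI : ∀ n : ℤ, Valued.v (algebraMap ℚ (v.adicCompletion ℚ) (n : ℚ)) ≤ 1 := fun n => by
      rw [vcompl]; exact val_int_le_one v n
    by_cases hv : v ∈ hfin.toFinset
    · rw [← Finset.mul_prod_erase _ _ hv, Int.cast_mul, map_mul, map_mul, map_mul, hcast (bv v),
        mul_right_comm, mul_comm (Valued.v (algebraMap ℤ (v.adicCompletion ℚ) (bv v))),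
        ← Valuation.map_mul]
      exact mul_le_one' (hbv v) (hI _)
    · have hx : x.2 v ∈ v.adicCompletionIntegers ℚ := by simpa using hv
      rw [Valuation.map_mul]
      exact mul_le_one' (hI _) hx
  obtain ⟨q0, hq0⟩ := strong_approx (b : ℤ).natAbs (b : ℤ) hb0 le_rfl (fun v => x.2 v) ha
  set z : ℤ := ⌊x.1 - (q0 : ℝ)⌋ with hz
  set q : ℚ := q0 + z with hqdef
  have hreal : (x.1 - (q : ℝ)) ∈ Set.Ico (0 : ℝ) 1 := by
    have : x.1 - (q : ℝ) = Int.fract (x.1 - (q0 : ℝ)) := by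
      rw [Int.fract, hqdef]
      push_cast
      ring
    rw [this]
    exact ⟨Int.fract_nonneg _, Int.fract_lt_one _⟩
  have hfin : ∀ v : HeightOneSpectrum ℤ,
      (x.2 - algebraMap ℚ (FiniteAdeleRing ℤ ℚ) q) v ∈ v.adicCompletionIntegers ℚ := by
    intro v
    show Valued.v (x.2 v - algebraMap ℚ (v.adicCompletion ℚ) q) ≤ 1
    have hsplit : x.2 v - algebraMap ℚ (v.adicCompletion ℚ) q =
        (x.2 v - algebraMap ℚ (v.adicCompletion ℚ) q0)
          - algebraMap ℚ (v.adicCompletion ℚ) ((z : ℚ)) := by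
      rw [hqdef, (algebraMap ℚ (v.adicCompletion ℚ)).map_add]
      ring
    rw [hsplit]
    refine le_trans (Valuation.map_sub _ _ _) (max_le (hq0 v) ?_)
    rw [vcompl]
    exact val_int_le_one v z
  refine ⟨q, ⟨hreal, hfin⟩, ?_⟩
  intro y hy
  obtain ⟨hy1, hy2⟩ := hy
  have hint : ∀ v : HeightOneSpectrum ℤ, v.valuation ℚ ((q - y : ℚ)) ≤ 1 := by
    intro v
    have h1 : Valued.v (x.2 v - algebraMap ℚ (v.adicCompletion ℚ) y) ≤ 1 := hy2 v
    have h2 : Valued.v (x.2 v - algebraMap ℚ (v.adicCompletion ℚ) q) ≤ 1 := hfin v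
    have h3 : algebraMap ℚ (v.adicCompletion ℚ) ((q - y : ℚ)) =
        (x.2 v - algebraMap ℚ (v.adicCompletion ℚ) y)
          - (x.2 v - algebraMap ℚ (v.adicCompletion ℚ) q) := by
      rw [(algebraMap ℚ (v.adicCompletion ℚ)).map_sub]
      ring
    rw [← vcompl v, h3]
    exact le_trans (Valuation.map_sub _ _ _) (max_le h1 h2)
  obtain ⟨k, hk⟩ := rat_int_of_val_le_one _ hint
  have habs : |(q : ℝ) - (y : ℝ)| < 1 := by
    have h1 := hy1.1
    have h2 := hy1.2
    have h3 := hreal.1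
    have h4 := hreal.2
    rw [abs_lt]
    constructor <;> linarith
  have hkr : ((k : ℝ)) = (q : ℝ) - (y : ℝ) := by
    have : ((k : ℚ) : ℝ) = ((q - y : ℚ) : ℝ) := by rw [hk]
    push_cast at this
    linarith [this]
  have hk1 : |k| < 1 := by
    have : |((k : ℝ))| < 1 := by rw [hkr]; exact habs
    exact_mod_cast this
  have hk0 : k = 0 := by
    rw [abs_lt] at hk1
    omega
  have : (q : ℚ) - y = 0 := by rw [← hk, hk0]; norm_num
  linarith [this]
end
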